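/- arXiv:2511.22251 — 5 statements merged into one kernel-verified Lean document; each statement's English description precedes it below -/
import Mathlib

section
/- Let G be a finite set, z ∈ {0,1}^G, and ζ ∈ {0,1}^{|G|}. Suppose ζ satisfies the constraints ∑_{j∈G} z_j ≤ k - 1 + (|G| - (k-1))·ζ^k and k·ζ^k ≤ ∑_{j∈G} z_j for all k ∈ [|G|]. Then for every k ∈ [|G|], ζ^k = 1 if and only if ∑_{j∈G} z_j ≥ k. -/
theorem stmt5 {ι : Type*} (G : Finset ι) (z : ι → ℝ) (ζ : ℕ → ℝ)
    (hz : ∀ j ∈ G, z j = 0 ∨ z j = 1)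
    (hζbin : ∀ k ∈ Finset.Icc 1 G.card, ζ k = 0 ∨ ζ k = 1)
    (h1 : ∀ k ∈ Finset.Icc 1 G.card,
      ∑ j ∈ G, z j ≤ (k : ℝ) - 1 + ((G.card : ℝ) - ((k : ℝ) - 1)) * ζ k)
    (h2 : ∀ k ∈ Finset.Icc 1 G.card, (k : ℝ) * ζ k ≤ ∑ j ∈ G, z j) :
    ∀ k ∈ Finset.Icc 1 G.card, (ζ k = 1 ↔ (k : ℝ) ≤ ∑ j ∈ G, z j) := by
  intro k hk
  have a1 := h1 k hk
  have a2 := h2 k hk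
  rcases hζbin k hk with h | h <;> rw [h] at a1 a2 ⊢ <;>
    constructor <;> intro hh <;> [skip; linarith; skip; skip] <;> linarith
end

section
/- Let 𝒢 be a partition of [n], Π ≤ S_n the group of permutations fixing each block of 𝒢 setwise, α ∈ ℝ^n, β ∈ ℝ, and (ẑ, x̂) ∈ {0,1}^n × ℝ. For each G ∈ 𝒢 and k ∈ [|G|], let ζ^k_G = 1 iff ∑_{j∈G} ẑ_j ≥ k, and let α^k_G be the k-th largest value of {α_j : j ∈ G}. Then (ẑ, x̂) satisfies ⟨π⁻¹(α), ẑ⟩ + β ≤ x̂ for all π ∈ Π if and only if ∑_{G∈𝒢} ∑_{k=1}^{|G|} α^k_G ζ^k_G + β ≤ x̂. -/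
/-!
For a block-preserving `π`, the cut value `⟨π⁻¹ α, ẑ⟩` is `∑_G ∑_{j ∈ π(S_G)} α_j`, where `S_G` is
the support of `ẑ` in `G`, and `π(S_G)` can be any subset of `G` of size `|S_G|`. An exchange
argument shows that the largest such sum is attained on the indices of the `|S_G|` largest values of
`α` on `G`, i.e. it is the sum of the first `|S_G|` entries of `descList α G`, which is the inner sum
on the right. Permutations realising the optimal subsets block by block glue to a single element
of `Π`, since the blocks partition `Fin n`.
-/

def permAct {n : ℕ} (π : Equiv.Perm (Fin n)) (x : Fin n → ℝ) : Fin n → ℝ :=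
  fun i => x (π⁻¹ i)

/-- The entries of `v` restricted to `G`, listed in non-increasing order. -/
noncomputable def descList {n : ℕ} (v : Fin n → ℝ) (G : Finset (Fin n)) : List ℝ :=
  ((G.1.map v).sort (· ≤ ·)).reverse

open Finset

theorem Finset.sum_le_sum_of_card_eq_of_forall_le {ι M : Type*} [DecidableEq ι]
    [AddCommMonoid M] [LinearOrder M] [IsOrderedCancelAddMonoid M]
    {s t : Finset ι} {f : ι → M} (hcard : #s = #t)
    (hle : ∀ x ∈ s \ t, ∀ y ∈ t \ s, f x ≤ f y) : ∑ i ∈ s, f i ≤ ∑ i ∈ t, f i := by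
  rw [← sum_sdiff_le_sum_sdiff]
  have hcard' : #(s \ t) = #(t \ s) := card_sdiff_comm hcard
  rcases (t \ s).eq_empty_or_nonempty with hempty | hne
  · rw [hempty, card_empty, card_eq_zero] at hcard'
    simp [hempty, hcard']
  · calc ∑ i ∈ s \ t, f i ≤ #(s \ t) • (t \ s).inf' hne f :=
          sum_le_card_nsmul _ _ _ fun x hx => le_inf' hne f fun y hy => hle x hx y hy
      _ = #(t \ s) • (t \ s).inf' hne f := by rw [hcard']
      _ ≤ ∑ i ∈ t \ s, f i := card_nsmul_le_sum _ _ _ fun y hy => inf'_le f hy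

theorem exists_perm_mapsTo_image_eq {ι : Type*} [DecidableEq ι] {G s t : Finset ι}
    (hs : s ⊆ G) (ht : t ⊆ G) (hcard : #s = #t) :
    ∃ σ : Equiv.Perm ι, (∀ x ∈ G, σ x ∈ G) ∧ s.image σ = t := by
  have hcard' : #(s.subtype (· ∈ G)) = #(t.subtype (· ∈ G)) := by
    rw [card_subtype, card_subtype, filter_true_of_mem hs, filter_true_of_mem ht, hcard]
  obtain ⟨τ, hτ⟩ := Equiv.Perm.exists_map_finset_eq _ _ hcard'
  refine ⟨Equiv.Perm.ofSubtype τ, fun x hx => ?_, ?_⟩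
  · rw [Equiv.Perm.ofSubtype_apply_of_mem τ hx]
    exact (τ ⟨x, hx⟩).2
  · refine eq_of_subset_of_card_le (fun y hy => ?_) ?_
    · obtain ⟨x, hx, rfl⟩ := mem_image.1 hy
      rw [Equiv.Perm.ofSubtype_apply_of_mem τ (hs hx)]
      have hτx : τ ⟨x, hs hx⟩ ∈ t.subtype (· ∈ G) := hτ ▸ mem_map_of_mem _ (mem_subtype.2 hx)
      exact mem_subtype.1 hτx
    · rw [card_image_of_injective _ (Equiv.injective _), hcard]

theorem exists_perm_eq_on_blocks {ι : Type*} [Finite ι] (𝒢 : Finset (Finset ι))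
    (hcover : ∀ i, ∃ G ∈ 𝒢, i ∈ G)
    (hdisj : ∀ G ∈ 𝒢, ∀ G' ∈ 𝒢, G ≠ G' → Disjoint G G')
    (σ : Finset ι → Equiv.Perm ι) (hσ : ∀ G ∈ 𝒢, ∀ x ∈ G, σ G x ∈ G) :
    ∃ π : Equiv.Perm ι, ∀ G ∈ 𝒢, ∀ x ∈ G, π x = σ G x := by
  choose blk hblk hmem using hcover
  have hblk_eq : ∀ G ∈ 𝒢, ∀ x ∈ G, blk x = G := fun G hG x hx =>
    by_contra fun hne => disjoint_left.1 (hdisj _ (hblk x) G hG hne) (hmem x) hx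
  have hblk_apply : ∀ x, blk (σ (blk x) x) = blk x := fun x =>
    hblk_eq _ (hblk x) _ (hσ _ (hblk x) x (hmem x))
  have hinj : Function.Injective fun x => σ (blk x) x := by
    intro x y hxy
    have hxy_blk : blk x = blk y := by
      rw [← hblk_apply x, ← hblk_apply y]; exact congrArg blk hxy
    simp only [hxy_blk] at hxy
    exact (σ (blk y)).injective hxy
  exact ⟨Equiv.ofBijective _ hinj.bijective_of_finite, fun G hG x hx => by
    simp [hblk_eq G hG x hx]⟩

theorem exists_perm_image_eq_on_blocks {ι : Type*} [Finite ι] [DecidableEq ι]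
    (𝒢 : Finset (Finset ι)) (hcover : ∀ i, ∃ G ∈ 𝒢, i ∈ G)
    (hdisj : ∀ G ∈ 𝒢, ∀ G' ∈ 𝒢, G ≠ G' → Disjoint G G') (s t : Finset ι → Finset ι)
    (hs : ∀ G ∈ 𝒢, s G ⊆ G) (ht : ∀ G ∈ 𝒢, t G ⊆ G) (hcard : ∀ G ∈ 𝒢, #(s G) = #(t G)) :
    ∃ π : Equiv.Perm ι, (∀ G ∈ 𝒢, ∀ x ∈ G, π x ∈ G) ∧ ∀ G ∈ 𝒢, (s G).image π = t G := by
  have hblock : ∀ G, ∃ σ : Equiv.Perm ι, G ∈ 𝒢 → (∀ x ∈ G, σ x ∈ G) ∧ (s G).image σ = t G := by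
    intro G
    by_cases hG : G ∈ 𝒢
    · obtain ⟨σ, hσ⟩ := exists_perm_mapsTo_image_eq (hs G hG) (ht G hG) (hcard G hG)
      exact ⟨σ, fun _ => hσ⟩
    · exact ⟨1, fun h => absurd h hG⟩
  choose σ hσ using hblock
  obtain ⟨π, hπ⟩ := exists_perm_eq_on_blocks 𝒢 hcover hdisj σ fun G hG => (hσ G hG).1
  refine ⟨π, fun G hG x hx => hπ G hG x hx ▸ (hσ G hG).1 x hx, fun G hG => ?_⟩
  rw [← (hσ G hG).2]
  exact image_congr fun x hx => hπ G hG x (hs G hG hx)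

theorem sum_eq_sum_sum_of_partition {ι M : Type*} [Fintype ι] [DecidableEq ι] [AddCommMonoid M]
    (𝒢 : Finset (Finset ι)) (hcover : ∀ i, ∃ G ∈ 𝒢, i ∈ G)
    (hdisj : ∀ G ∈ 𝒢, ∀ G' ∈ 𝒢, G ≠ G' → Disjoint G G') (f : ι → M) :
    ∑ i, f i = ∑ G ∈ 𝒢, ∑ i ∈ G, f i := by
  have huniv : (univ : Finset ι) = 𝒢.biUnion id := by
    ext i; simpa using hcover i
  rw [huniv, sum_biUnion (t := id) fun G hG G' hG' hne => hdisj G hG G' hG' hne]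
  rfl

theorem sum_mul_eq_sum_filter_of_eq_zero_or_eq_one {ι R : Type*} [NonAssocSemiring R]
    [DecidableEq R] (s : Finset ι) (f z : ι → R) (hz : ∀ j, z j = 0 ∨ z j = 1) :
    ∑ i ∈ s, f i * z i = ∑ i ∈ s with z i = 1, f i := by
  rw [sum_filter]
  refine sum_congr rfl fun i _ => ?_
  rcases hz i with h | h
  · by_cases h01 : (0 : R) = 1 <;> simp [h, h01]
  · simp [h]

theorem List.sum_take_eq_sum_range_getD {M : Type*} [AddCommMonoid M] (l : List M) (m : ℕ) :
    (l.take m).sum = ∑ k ∈ Finset.range m, l.getD k 0 := by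
  induction l generalizing m with
  | nil => simp
  | cons a l ih =>
    cases m with
    | zero => simp
    | succ m => simp [Finset.sum_range_succ', ih, add_comm]

theorem sum_range_getD_mul_ite (l : List ℝ) {m N : ℕ} (hm : m ≤ N) :
    ∑ k ∈ range N, l.getD k 0 * (if (k : ℝ) + 1 ≤ m then 1 else 0) = (l.take m).sum := by
  have hcond : ∀ k : ℕ, (k : ℝ) + 1 ≤ m ↔ k < m := fun k => by exact_mod_cast Nat.succ_le_iff
  simp only [hcond, mul_ite, mul_one, mul_zero]
  rw [← sum_filter, List.sum_take_eq_sum_range_getD]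
  congr 1
  ext k
  simp only [mem_filter, mem_range]
  omega

theorem descList_pairwise {n : ℕ} (v : Fin n → ℝ) (G : Finset (Fin n)) :
    (descList v G).Pairwise (· ≥ ·) := by
  unfold descList
  rw [List.pairwise_reverse]
  exact Multiset.pairwise_sort _ _

theorem coe_descList {n : ℕ} (v : Fin n → ℝ) (G : Finset (Fin n)) :
    (descList v G : Multiset ℝ) = G.1.map v := by
  rw [descList, Multiset.coe_reverse, Multiset.sort_eq]

theorem exists_list_map_eq_descList {n : ℕ} (v : Fin n → ℝ) (G : Finset (Fin n)) :
    ∃ L : List (Fin n), (L : Multiset (Fin n)) = G.1 ∧ L.Pairwise (fun i j => v j ≤ v i) ∧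
      L.map v = descList v G := by
  set L := G.toList.mergeSort fun i j => decide (v j ≤ v i)
  have hsorted : L.Pairwise (fun i j => v j ≤ v i) := by
    simpa using List.pairwise_mergeSort (le := fun i j => decide (v j ≤ v i))
      (fun a b c hab hbc => by simp only [decide_eq_true_eq] at *; linarith)
      (fun a b => by simpa using le_total (v b) (v a)) G.toList
  have hL : (L : Multiset (Fin n)) = G.1 := by
    rw [Multiset.coe_eq_coe.2 (List.mergeSort_perm _ _), coe_toList]
  refine ⟨L, hL, hsorted, List.Perm.eq_of_pairwise' (r := (· ≥ ·)) (hsorted.map v fun _ _ h => h)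
    (descList_pairwise v G) ?_⟩
  rw [← Multiset.coe_eq_coe, coe_descList, ← Multiset.map_coe, hL]

theorem exists_subset_sum_eq_descList_take {n : ℕ} (v : Fin n → ℝ) {G : Finset (Fin n)} {m : ℕ}
    (hm : m ≤ #G) : ∃ t ⊆ G, #t = m ∧ ∑ j ∈ t, v j = ((descList v G).take m).sum ∧
      ∀ x ∈ G \ t, ∀ y ∈ t, v x ≤ v y := by
  obtain ⟨L, hL, hsorted, hmap⟩ := exists_list_map_eq_descList v G
  have hnodup : L.Nodup := by rw [← Multiset.coe_nodup, hL]; exact G.nodup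
  have hmem : ∀ x, x ∈ L ↔ x ∈ G := fun x => by rw [← Multiset.mem_coe, hL]; rfl
  have hlen : L.length = #G := by rw [← Multiset.coe_card, hL]; rfl
  have htake_nodup : (L.take m).Nodup := hnodup.sublist (List.take_sublist _ _)
  refine ⟨(L.take m).toFinset,
    fun x hx => (hmem x).1 (List.mem_of_mem_take (List.mem_toFinset.1 hx)), ?_, ?_, ?_⟩
  · rw [List.toFinset_card_of_nodup htake_nodup, List.length_take, hlen, min_eq_left hm]
  · rw [List.sum_toFinset _ htake_nodup, ← hmap, List.map_take]
  · intro x hx y hy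
    obtain ⟨hxG, hxt⟩ := mem_sdiff.1 hx
    have hx_drop : x ∈ L.drop m := by
      rw [← hmem, ← List.take_append_drop m L, List.mem_append] at hxG
      exact hxG.resolve_left fun h => hxt (List.mem_toFinset.2 h)
    rw [← List.take_append_drop m L, List.pairwise_append] at hsorted
    exact hsorted.2.2 y (List.mem_toFinset.1 hy) x hx_drop

theorem sum_le_descList_take {n : ℕ} (v : Fin n → ℝ) {G s : Finset (Fin n)} (hs : s ⊆ G) :
    ∑ j ∈ s, v j ≤ ((descList v G).take #s).sum := by
  obtain ⟨t, -, hcard, hsum, htop⟩ := exists_subset_sum_eq_descList_take v (card_le_card hs)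
  rw [← hsum]
  refine sum_le_sum_of_card_eq_of_forall_le hcard.symm fun x hx y hy => ?_
  obtain ⟨hxs, hxt⟩ := mem_sdiff.1 hx
  exact htop x (mem_sdiff.2 ⟨hs hxs, hxt⟩) y (mem_sdiff.1 hy).1

theorem stmt6 {n : ℕ} (𝒢 : Finset (Finset (Fin n)))
    (hcover : ∀ i, ∃ G ∈ 𝒢, i ∈ G)
    (hdisj : ∀ G ∈ 𝒢, ∀ G' ∈ 𝒢, G ≠ G' → Disjoint G G')
    (α : Fin n → ℝ) (β xhat : ℝ) (zhat : Fin n → ℝ)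
    (hzhat : ∀ j, zhat j = 0 ∨ zhat j = 1) :
    (∀ π : Equiv.Perm (Fin n), (∀ G ∈ 𝒢, ∀ i ∈ G, π i ∈ G) →
        ∑ i, permAct π⁻¹ α i * zhat i + β ≤ xhat) ↔
      ∑ G ∈ 𝒢, ∑ k ∈ Finset.range G.card,
          (descList α G).getD k 0 *
            (if ((k : ℝ) + 1 ≤ ∑ j ∈ G, zhat j) then (1 : ℝ) else 0) + β ≤ xhat := by
  classical
  set S : Finset (Fin n) → Finset (Fin n) := fun G => {j ∈ G | zhat j = 1}
  have hS_sub : ∀ G, S G ⊆ G := fun G => filter_subset _ _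
  have hlhs : ∀ π : Equiv.Perm (Fin n),
      ∑ i, permAct π⁻¹ α i * zhat i = ∑ G ∈ 𝒢, ∑ j ∈ (S G).image π, α j := by
    intro π
    rw [sum_eq_sum_sum_of_partition 𝒢 hcover hdisj]
    refine sum_congr rfl fun G _ => ?_
    rw [sum_mul_eq_sum_filter_of_eq_zero_or_eq_one _ _ _ hzhat,
      sum_image fun x _ y _ h => π.injective h]
    simp [permAct, S]
  have hrhs : ∀ G, ∑ k ∈ range #G, (descList α G).getD k 0 *
      (if ((k : ℝ) + 1 ≤ ∑ j ∈ G, zhat j) then (1 : ℝ) else 0) =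
        ((descList α G).take #(S G)).sum := by
    intro G
    have hz : ∑ j ∈ G, zhat j = #(S G) := by
      simpa using sum_mul_eq_sum_filter_of_eq_zero_or_eq_one G 1 zhat hzhat
    rw [hz, sum_range_getD_mul_ite _ (card_le_card (hS_sub G))]
  simp only [hrhs, hlhs]
  constructor
  · intro h
    choose t ht_sub ht_card ht_sum _ using
      fun G => exists_subset_sum_eq_descList_take α (card_le_card (hS_sub G))
    obtain ⟨π, hπ, himage⟩ := exists_perm_image_eq_on_blocks 𝒢 hcover hdisj S t
      (fun G _ => hS_sub G) (fun G _ => ht_sub G) fun G _ => (ht_card G).symm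
    have hval := h π hπ
    rwa [sum_congr rfl fun G hG => by rw [himage G hG, ht_sum G]] at hval
  · intro h π hπ
    refine le_trans (add_le_add_left (sum_le_sum fun G hG => ?_) β) h
    have hsub : (S G).image π ⊆ G := image_subset_iff.2 fun x hx => hπ G hG x (hS_sub G hx)
    simpa only [card_image_of_injective _ π.injective] using sum_le_descList_take α hsub
end

section
/- Let 𝒢 be a partition of a finite set N, ẑ ∈ {0,1}^N with support N₁ = {j : ẑ_j = 1}, and C ⊆ N. Define ζ^k_G = 1 iff |N₁ ∩ G| ≥ k. Then the inequality ∑_{G∈𝒢} ∑_{k=1}^{|G∩C|} ζ^k_G ≤ |C| - 1 is violated if and only if ζ^{|G∩C|}_G = 1 for every G ∈ 𝒢 with G ∩ C ≠ ∅, which holds if and only if R_G(N₁) ≥ R_G(C) for all G ∈ 𝒢. -/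
lemma inner_sum_eq_min (m n : ℕ) :
    ∑ k ∈ Finset.Icc 1 m, (if k ≤ n then (1 : ℝ) else 0) = (min m n : ℕ) := by
  rw [Finset.sum_boole]
  congr 1
  have : (Finset.Icc 1 m).filter (fun k => k ≤ n) = Finset.Icc 1 (min m n) := by
    ext k; simp only [Finset.mem_filter, Finset.mem_Icc]; omega
  rw [this, Nat.card_Icc]
  omega

theorem stmt11 {ι : Type*} [Fintype ι] [DecidableEq ι]
    (𝒢 : Finset (Finset ι))
    (hcover : ∀ i, ∃ G ∈ 𝒢, i ∈ G)
    (hdisj : ∀ G ∈ 𝒢, ∀ G' ∈ 𝒢, G ≠ G' → Disjoint G G')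
    (zhat : ι → ℝ) (hzhat : ∀ j, zhat j = 0 ∨ zhat j = 1)
    (N₁ : Finset ι) (hN₁ : N₁ = Finset.univ.filter fun j => zhat j = 1)
    (C : Finset ι) :
    (((C.card : ℝ) - 1 < ∑ G ∈ 𝒢, ∑ k ∈ Finset.Icc 1 (G ∩ C).card,
          (if k ≤ (N₁ ∩ G).card then (1 : ℝ) else 0)) ↔
        ∀ G ∈ 𝒢, (G ∩ C).Nonempty →
          (if (G ∩ C).card ≤ (N₁ ∩ G).card then (1 : ℝ) else 0) = 1) ∧
      ((∀ G ∈ 𝒢, (G ∩ C).Nonempty →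
          (if (G ∩ C).card ≤ (N₁ ∩ G).card then (1 : ℝ) else 0) = 1) ↔
        ∀ G ∈ 𝒢, (C ∩ G).card ≤ (N₁ ∩ G).card) := by
  have hiff : ∀ m n : ℕ, ((if m ≤ n then (1 : ℝ) else 0) = 1 ↔ m ≤ n) := by
    intro m n
    split <;> simp_all
  have hcardsum : ∑ G ∈ 𝒢, (G ∩ C).card = C.card := by
    rw [← Finset.card_biUnion (by
      intro G hG G' hG' hne
      exact ((hdisj G hG G' hG' hne).mono Finset.inter_subset_left
        Finset.inter_subset_left))]
    congr 1
    ext i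
    simp only [Finset.mem_biUnion, Finset.mem_inter]
    constructor
    · rintro ⟨G, _, _, h⟩; exact h
    · intro hi; obtain ⟨G, hG, hiG⟩ := hcover i; exact ⟨G, hG, hiG, hi⟩
  have hsum : ∑ G ∈ 𝒢, ∑ k ∈ Finset.Icc 1 (G ∩ C).card,
      (if k ≤ (N₁ ∩ G).card then (1 : ℝ) else 0)
      = ((∑ G ∈ 𝒢, min (G ∩ C).card (N₁ ∩ G).card : ℕ) : ℝ) := by
    push_cast
    exact Finset.sum_congr rfl fun G _ => by
      rw [inner_sum_eq_min]; push_cast; ring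
  set T := ∑ G ∈ 𝒢, min (G ∩ C).card (N₁ ∩ G).card with hT
  have hTle : T ≤ C.card := by
    rw [← hcardsum]
    exact Finset.sum_le_sum fun G _ => min_le_left _ _
  have hsecond : (∀ G ∈ 𝒢, (G ∩ C).Nonempty →
      (if (G ∩ C).card ≤ (N₁ ∩ G).card then (1 : ℝ) else 0) = 1) ↔
      ∀ G ∈ 𝒢, (C ∩ G).card ≤ (N₁ ∩ G).card := by
    constructor
    · intro h G hG
      rw [Finset.inter_comm]
      by_cases hne : (G ∩ C).Nonempty
      · exact (hiff _ _).mp (h G hG hne)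
      · simp [Finset.not_nonempty_iff_eq_empty.mp hne]
    · intro h G hG _
      rw [hiff, ← Finset.inter_comm]
      exact h G hG
  refine ⟨?_, hsecond⟩
  rw [hsum]
  constructor
  · intro h G hG hne
    have h1 : (C.card : ℝ) < (T : ℝ) + 1 := by linarith
    have h2 : C.card < T + 1 := by exact_mod_cast h1
    have hTeq : T = C.card := by omega
    rw [hiff]
    have heach : ∀ G' ∈ 𝒢, min (G' ∩ C).card (N₁ ∩ G').card = (G' ∩ C).card := by
      rw [← Finset.sum_eq_sum_iff_of_le (fun G' _ => min_le_left _ _)]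
      rw [← hT, hTeq, hcardsum]
    have := heach G hG
    omega
  · intro h
    have heach : ∀ G ∈ 𝒢, min (G ∩ C).card (N₁ ∩ G).card = (G ∩ C).card := by
      intro G hG
      by_cases hne : (G ∩ C).Nonempty
      · have := (hiff _ _).mp (h G hG hne)
        omega
      · simp [Finset.not_nonempty_iff_eq_empty.mp hne]
    have hTeq : T = C.card := by
      rw [hT]
      rw [Finset.sum_congr rfl heach, hcardsum]
    rw [hTeq]
    have : (0:ℝ) ≤ C.card := by positivity
    linarith
end

section
/- Let N be jobs with processing times p and setup times s satisfying the triangle inequality, and C ⊆ N. For j ∈ C define θ_j = p(j) + max{s(k,j) : k ∈ C, k ≠ j} (with θ_j = p(j) if C = {j}). Then for every subset D ⊆ C, the minimum makespan satisfies T(D) ≥ T(C) - ∑_{j ∈ C \ D} θ_j. Equivalently, the Benders cut T ≥ T(C) - ∑_{j∈C}(1 - z_j)θ_j is valid for every binary assignment z with support D = {j ∈ C : z_j = 1} and T ≥ T(D). -/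
/-!
Take any sequence of `D` and append the jobs of `C \ D` one at a time at its end.
Appending `j` costs `p j` plus the setup from the current last job, which lies in `C \ {j}`,
so each step costs at most `θ_j`; the result is a sequence of `C`, hence
`T(C) ≤ T(D) + ∑_{j ∈ C \ D} θ_j`.
-/

def setupTime {ι : Type*} (s : ι → ι → ℝ) (L : List ι) : ℝ :=
  ((L.zip L.tail).map fun q => s q.1 q.2).sum

noncomputable def minMakespan {ι : Type*} [DecidableEq ι]
    (p : ι → ℝ) (s : ι → ι → ℝ) (C : Finset ι) : ℝ :=
  sInf {t | ∃ L : List ι, L.Nodup ∧ L.toFinset = C ∧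
    t = (L.map p).sum + setupTime s L}

namespace Makespan

variable {ι : Type*}

def makespan (p : ι → ℝ) (s : ι → ι → ℝ) (L : List ι) : ℝ :=
  (L.map p).sum + setupTime s L

theorem setupTime_cons_cons (s : ι → ι → ℝ) (x y : ι) (L : List ι) :
    setupTime s (x :: y :: L) = s x y + setupTime s (y :: L) := by
  simp [setupTime]

theorem setupTime_append_singleton (s : ι → ι → ℝ) (a : ι) :
    ∀ (L : List ι) (hL : L ≠ []),
      setupTime s (L ++ [a]) = setupTime s L + s (L.getLast hL) a
  | [x], _ => by simp [setupTime]
  | x :: y :: L, _ => by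
      have hyL : y :: L ≠ [] := List.cons_ne_nil y L
      simp only [List.cons_append]
      rw [setupTime_cons_cons, setupTime_cons_cons, ← List.cons_append,
        setupTime_append_singleton s a (y :: L) hyL, List.getLast_cons hyL, add_assoc]

theorem setupTime_nonneg {s : ι → ι → ℝ} (hs : ∀ j k, 0 ≤ s j k) (L : List ι) :
    0 ≤ setupTime s L :=
  List.sum_nonneg fun _ hx => by
    obtain ⟨q, -, rfl⟩ := List.mem_map.mp hx
    exact hs _ _

variable [DecidableEq ι]

/-- `p j + maxSetupInto s C j` is the paper's `θ_j`. -/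
noncomputable def maxSetupInto (s : ι → ι → ℝ) (C : Finset ι) (j : ι) : ℝ :=
  ((C.erase j).image fun k => s k j).max.unbotD 0

theorem maxSetupInto_nonneg {s : ι → ι → ℝ} (hs : ∀ j k, 0 ≤ s j k) (C : Finset ι) (j : ι) :
    0 ≤ maxSetupInto s C j := by
  unfold maxSetupInto
  rcases hmax : ((C.erase j).image fun k => s k j).max with _ | m
  · exact le_rfl
  · obtain ⟨k, -, rfl⟩ := Finset.mem_image.mp (Finset.mem_of_max hmax)
    exact hs k j

theorem le_maxSetupInto (s : ι → ι → ℝ) {C : Finset ι} {j k : ι} (hk : k ∈ C.erase j) :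
    s k j ≤ maxSetupInto s C j :=
  WithBot.le_unbotD (Finset.le_max (Finset.mem_image_of_mem _ hk))

theorem makespan_append_singleton_le (p : ι → ℝ) {s : ι → ι → ℝ} (hs : ∀ j k, 0 ≤ s j k)
    {C : Finset ι} {L : List ι} {a : ι} (hLC : L.toFinset ⊆ C) (haL : a ∉ L) :
    makespan p s (L ++ [a]) ≤ makespan p s L + (p a + maxSetupInto s C a) := by
  rcases eq_or_ne L [] with rfl | hL
  · simpa [makespan, setupTime] using maxSetupInto_nonneg hs C a
  · have hlast : L.getLast hL ∈ C.erase a :=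
      Finset.mem_erase.mpr ⟨fun h => haL (h ▸ L.getLast_mem hL),
        hLC (List.mem_toFinset.mpr (L.getLast_mem hL))⟩
    have := le_maxSetupInto s hlast
    simp only [makespan, List.map_append, List.sum_append, List.map_singleton,
      List.sum_singleton, setupTime_append_singleton s a L hL]
    linarith

theorem exists_extension_makespan_le (p : ι → ℝ) {s : ι → ι → ℝ} (hs : ∀ j k, 0 ≤ s j k)
    {C : Finset ι} {L : List ι} (hL : L.Nodup) (E : Finset ι) (hE : Disjoint L.toFinset E)
    (hLEC : L.toFinset ∪ E ⊆ C) :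
    ∃ M : List ι, M.Nodup ∧ M.toFinset = L.toFinset ∪ E ∧
      makespan p s M ≤ makespan p s L + ∑ j ∈ E, (p j + maxSetupInto s C j) := by
  induction E using Finset.induction_on with
  | empty => exact ⟨L, hL, by simp, by simp⟩
  | @insert a E haE ih =>
    have haL : a ∉ L.toFinset := Finset.disjoint_right.mp hE (Finset.mem_insert_self a E)
    obtain ⟨M, hM, hMLE, hMcost⟩ := ih (hE.mono_right (Finset.subset_insert a E))
      ((Finset.union_subset_union_right (Finset.subset_insert a E)).trans hLEC)
    have haM : a ∉ M := by
      rw [← List.mem_toFinset, hMLE, Finset.mem_union]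
      tauto
    have hMC : M.toFinset ⊆ C := hMLE ▸
      (Finset.union_subset_union_right (Finset.subset_insert a E)).trans hLEC
    refine ⟨M ++ [a], hM.append (List.nodup_singleton a) (by simpa using haM), ?_, ?_⟩
    · rw [List.toFinset_append, hMLE]
      ext x
      simp only [Finset.mem_union, Finset.mem_insert, List.toFinset_cons, List.toFinset_nil,
        Finset.notMem_empty, or_false]
      tauto
    · rw [Finset.sum_insert haE]
      linarith [makespan_append_singleton_le p hs hMC haM]

theorem minMakespan_le_makespan {p : ι → ℝ} {s : ι → ι → ℝ} (hs : ∀ j k, 0 ≤ s j k)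
    {C : Finset ι} {L : List ι} (hL : L.Nodup) (hLC : L.toFinset = C) :
    minMakespan p s C ≤ makespan p s L := by
  refine csInf_le ⟨∑ j ∈ C, p j, ?_⟩ ⟨L, hL, hLC, rfl⟩
  rintro _ ⟨M, hM, rfl, rfl⟩
  rw [List.sum_toFinset p hM]
  exact le_add_of_nonneg_right (setupTime_nonneg hs M)

theorem le_minMakespan (p : ι → ℝ) (s : ι → ι → ℝ) (C : Finset ι) {b : ℝ}
    (h : ∀ L : List ι, L.Nodup → L.toFinset = C → b ≤ makespan p s L) :
    b ≤ minMakespan p s C := by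
  refine le_csInf ⟨_, C.toList, C.nodup_toList, C.toList_toFinset, rfl⟩ ?_
  rintro _ ⟨L, hL, hLC, rfl⟩
  exact h L hL hLC

end Makespan

theorem stmt14_general {ι : Type*} [DecidableEq ι]
    (p : ι → ℝ)
    (s : ι → ι → ℝ) (hs : ∀ j k, 0 ≤ s j k)
    (C D : Finset ι) (hD : D ⊆ C) :
    minMakespan p s C -
        ∑ j ∈ C \ D, (p j + (((C.erase j).image fun k => s k j).max.unbotD 0)) ≤
      minMakespan p s D := by
  refine Makespan.le_minMakespan p s D fun L hL hLD => sub_le_iff_le_add.mpr ?_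
  obtain ⟨M, hM, hMC, hcost⟩ := Makespan.exists_extension_makespan_le p hs hL (C \ D)
    (hLD ▸ Finset.disjoint_sdiff) (by rw [hLD, Finset.union_sdiff_of_subset hD])
  rw [hLD, Finset.union_sdiff_of_subset hD] at hMC
  exact (Makespan.minMakespan_le_makespan hs hM hMC).trans hcost

theorem stmt14 {ι : Type*} [DecidableEq ι]
    (p : ι → ℝ) (hp : ∀ j, 0 ≤ p j)
    (s : ι → ι → ℝ) (hs : ∀ j k, 0 ≤ s j k)
    (htri : ∀ j k l, s j l ≤ s j k + s k l)
    (C D : Finset ι) (hD : D ⊆ C) :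
    minMakespan p s C -
        ∑ j ∈ C \ D, (p j + (((C.erase j).image fun k => s k j).max.unbotD 0)) ≤
      minMakespan p s D :=
  stmt14_general p s hs C D hD
end

section
/- Let z ∈ {0,1}^n and let ζ^k, k ∈ [n], be defined by ζ^k = 1 iff ∑_{j=1}^n z_j ≥ k. Then for any α ∈ ℝ^n, ∑_{k=1}^n α^{(k)} ζ^k = max over permutations π ∈ S_n of ∑_{j=1}^n α_{π(j)} z_j, where α^{(k)} is the k-th largest entry of α. -/
/-- `sortDesc v k` is the `(k+1)`-th largest entry of `v`. -/
noncomputable def sortDesc {n : ℕ} (v : Fin n → ℝ) : Fin n → ℝ :=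
  fun k => v (Tuple.sort v k.rev)

theorem stmt18 {n : ℕ} (z : Fin n → ℝ) (hz : ∀ j, z j = 0 ∨ z j = 1)
    (α : Fin n → ℝ) :
    IsGreatest {t | ∃ π : Equiv.Perm (Fin n), t = ∑ j, α (π j) * z j}
      (∑ k : Fin n,
        sortDesc α k * (if (((k : ℕ) : ℝ) + 1 ≤ ∑ j, z j) then (1 : ℝ) else 0)) := by
  classical
  set A : Finset (Fin n) := Finset.univ.filter (fun j => z j = 1) with hA
  set m : ℕ := A.card with hm
  -- the sum of z equals the number of ones
  have hsum : ∑ j, z j = (m : ℝ) := by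
    rw [← Finset.sum_filter_add_sum_filter_not Finset.univ (fun j => z j = 1)]
    have h1 : ∑ j ∈ Finset.univ.filter (fun j => z j = 1), z j = (m : ℝ) := by
      rw [hm, hA, Finset.card_eq_sum_ones, Nat.cast_sum]
      refine Finset.sum_congr rfl fun j hj => ?_
      simp only [Finset.mem_filter] at hj
      simp [hj.2]
    have h2 : ∑ j ∈ Finset.univ.filter (fun j => ¬ z j = 1), z j = 0 := by
      refine Finset.sum_eq_zero fun j hj => ?_
      simp only [Finset.mem_filter] at hj
      rcases hz j with h | h
      · exact h
      · exact absurd h hj.2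
    rw [h1, h2, add_zero]
  -- ζ as a function
  set ζ : Fin n → ℝ := fun k => if (k : ℕ) < m then 1 else 0 with hζ
  have hcond : ∀ k : Fin n,
      (if (((k : ℕ) : ℝ) + 1 ≤ ∑ j, z j) then (1 : ℝ) else 0) = ζ k := by
    intro k
    rw [hsum, hζ]
    congr 1
    simp only [eq_iff_iff]
    constructor
    · intro h
      exact_mod_cast Nat.lt_of_lt_of_le (Nat.lt_succ_self _) (by exact_mod_cast h)
    · intro h
      -- cast
      exact_mod_cast Nat.succ_le_of_lt h
  set σ : Equiv.Perm (Fin n) := Tuple.sort α with hσ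
  set τ : Equiv.Perm (Fin n) := (Fin.revPerm).trans σ with hτ
  have hτapp : ∀ k : Fin n, τ k = σ k.rev := fun k => rfl
  have hdesc : ∀ k : Fin n, sortDesc α k = α (τ k) := fun k => rfl
  have hmono : Monotone (α ∘ σ) := Tuple.monotone_sort α
  have hanti : Antitone (fun k => α (τ k)) := by
    intro i j hij
    exact hmono (Fin.rev_le_rev.mpr hij)
  have hmv : Monovary (fun k => α (τ k)) ζ := by
    intro i j hij
    simp only [hζ] at hij
    by_cases hi : (i : ℕ) < m
    · by_cases hj : (j : ℕ) < m
      · simp [hi, hj] at hij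
      · rw [if_pos hi, if_neg hj] at hij
        norm_num at hij
    · by_cases hj : (j : ℕ) < m
      · exact hanti (Fin.le_def.mpr (le_of_lt (lt_of_lt_of_le hj (not_lt.mp hi))))
      · simp [hi, hj] at hij
  -- construct ρ with z ∘ ρ = ζ
  have hmn : m ≤ n := by
    rw [hm]
    simpa using Finset.card_le_card (Finset.subset_univ A)
  have hBcard : (Finset.univ.filter (fun k : Fin n => (k : ℕ) < m)).card = m := by
    have : Finset.univ.filter (fun k : Fin n => (k : ℕ) < m)
        = Finset.map (Fin.castLEEmb hmn) Finset.univ := by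
      ext k
      simp only [Finset.mem_filter, Finset.mem_univ, true_and, Finset.mem_map,
        Fin.castLEEmb_apply]
      constructor
      · intro h
        exact ⟨⟨(k : ℕ), h⟩, by ext; simp⟩
      · rintro ⟨i, rfl⟩
        exact i.isLt
    rw [this]
    simp
  have hcards : (Finset.univ.filter (fun k : Fin n => (k : ℕ) < m)).card = A.card := by
    rw [hBcard, hm]
  set e := Finset.equivOfCardEq hcards with he
  set ρ : Equiv.Perm (Fin n) := e.extendSubtype with hρ
  have hzρ : ∀ k : Fin n, z (ρ k) = ζ k := by
    intro k
    by_cases hk : (k : ℕ) < m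
    · have hk' : k ∈ Finset.univ.filter (fun k : Fin n => (k : ℕ) < m) := by
        simp [hk]
      have := e.extendSubtype_mem k hk'
      rw [hρ, hζ]
      simp only [hk, if_true]
      simpa [hA] using this
    · have hk' : ¬ k ∈ Finset.univ.filter (fun k : Fin n => (k : ℕ) < m) := by
        simp [hk]
      have := e.extendSubtype_not_mem k hk'
      rw [hρ, hζ]
      simp only [hk, if_false]
      simp only [hA, Finset.mem_filter, Finset.mem_univ, true_and] at this
      rcases hz (e.extendSubtype k) with h | h
      · exact h
      · exact absurd h this
  constructor
  · -- membership: π := ρ.symm.trans τ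
    refine ⟨ρ.symm.trans τ, ?_⟩
    symm
    simp only [Equiv.trans_apply]
    calc ∑ j, α (τ (ρ.symm j)) * z j
        = ∑ k, α (τ (ρ.symm (ρ k))) * z (ρ k) := (Equiv.sum_comp ρ fun j => α (τ (ρ.symm j)) * z j).symm
      _ = ∑ k, α (τ k) * ζ k := by
          refine Finset.sum_congr rfl fun k _ => ?_
          rw [Equiv.symm_apply_apply, hzρ]
      _ = ∑ k, sortDesc α k * (if (((k : ℕ) : ℝ) + 1 ≤ ∑ j, z j) then (1 : ℝ) else 0) := by
          refine Finset.sum_congr rfl fun k _ => ?_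
          rw [hdesc, hcond]
  · -- upper bound
    rintro t ⟨π, rfl⟩
    set ν : Equiv.Perm (Fin n) := ρ.trans (π.trans τ.symm) with hν
    have hνapp : ∀ k, τ (ν k) = π (ρ k) := by
      intro k
      simp [hν, Equiv.trans_apply]
    have key : ∑ j, α (π j) * z j = ∑ k, α (τ (ν k)) * ζ k := by
      calc ∑ j, α (π j) * z j
          = ∑ k, α (π (ρ k)) * z (ρ k) := (Equiv.sum_comp ρ fun j => α (π j) * z j).symm
        _ = ∑ k, α (τ (ν k)) * ζ k := by
            refine Finset.sum_congr rfl fun k _ => ?_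
            rw [hzρ, hνapp]
    rw [key]
    calc ∑ k, α (τ (ν k)) * ζ k
        ≤ ∑ k, α (τ k) * ζ k := hmv.sum_comp_perm_mul_le_sum_mul (σ := ν)
      _ = _ := by
          refine Finset.sum_congr rfl fun k _ => ?_
          rw [hdesc, hcond]
end
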